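/- arXiv:2604.18475 — 7 statements merged into one kernel-verified Lean document; each statement's English description precedes it below -/
import Mathlib

section
/- Let G be a finite group. The prime-coprime graph Θ(G) is a split graph if and only if one of the following holds: (i) every element of G has order 1 or prime order; or (ii) there exists a fixed prime p such that every element of G not of order 1 or prime order has order p^k for some k ≥ 2; or (iii) there exist fixed distinct primes p and q such that every element of G not of order 1 or prime order has order pq. -/
/-- The prime-coprime graph: distinct vertices `g, h` are adjacent iff
`gcd (orderOf g) (orderOf h)` is `1` or a prime. -/
def primeCoprimeGraph (G : Type*) [Monoid G] : SimpleGraph G where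
  Adj g h := g ≠ h ∧
    (Nat.gcd (orderOf g) (orderOf h) = 1 ∨ (Nat.gcd (orderOf g) (orderOf h)).Prime)
  symm := by
    constructor
    rintro g h ⟨hne, hd⟩
    exact ⟨hne.symm, by rwa [Nat.gcd_comm]⟩
  loopless := by constructor; rintro g ⟨hne, -⟩; exact hne rfl

/-- A set of vertices is independent if no two of its elements are adjacent. -/
def IsIndepSet {V : Type*} (Γ : SimpleGraph V) (s : Set V) : Prop :=
  s.Pairwise fun a b => ¬ Γ.Adj a b

open scoped Classical in
/-- The independence number of a graph on a finite vertex set. -/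
noncomputable def indepNum {V : Type*} [Fintype V] (Γ : SimpleGraph V) : ℕ :=
  Finset.univ.sup fun s : Finset V => if IsIndepSet Γ (s : Set V) then s.card else 0

/-- A graph is split if its vertex set can be partitioned into two disjoint nonempty
subsets, one a clique and the other an independent set. -/
def IsSplit {V : Type*} (Γ : SimpleGraph V) : Prop :=
  ∃ K I : Set V, K.Nonempty ∧ I.Nonempty ∧ Disjoint K I ∧ K ∪ I = Set.univ ∧
    Γ.IsClique K ∧ IsIndepSet Γ I

/-!
Vertices whose order is 1 or prime are adjacent to every other vertex, while an element `x` of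
any other order is not adjacent to `x⁻¹ ≠ x`, which has the same order. Hence `Θ(G)` is split
exactly when any two element orders that are neither 1 nor prime have a gcd that is neither 1
nor prime. The set of element orders is closed under divisors, so once some order is neither 1
nor prime it has a divisor `p * q` (`p`, `q` prime, possibly equal) which is again an order, and
`p * q` then divides every such order `n`. Comparing `p * q` with the orders `r * s` of the
two-prime divisors of `n` forces `n = p ^ k` when `p = q` and `n = p * q` when `p ≠ q`.
-/

def IsOneOrPrime (n : ℕ) : Prop := n = 1 ∨ n.Prime

lemma IsOneOrPrime.of_dvd {m n : ℕ} (hn : IsOneOrPrime n) (hmn : m ∣ n) : IsOneOrPrime m := by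
  rcases hn with rfl | hn
  · exact Or.inl (Nat.dvd_one.mp hmn)
  · rcases hn.eq_one_or_self_of_dvd m hmn with rfl | rfl
    exacts [Or.inl rfl, Or.inr hn]

lemma not_isOneOrPrime_mul {p q : ℕ} (hp : p.Prime) (hq : q.Prime) : ¬IsOneOrPrime (p * q) := by
  rintro (h | h)
  · exact hp.ne_one (Nat.eq_one_of_mul_eq_one_right h)
  · exact Nat.not_prime_mul hp.ne_one hq.ne_one h

lemma eq_mul_of_dvd_mul_of_not_isOneOrPrime {p q e : ℕ} (hp : p.Prime) (hq : q.Prime)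
    (he : e ∣ p * q) (h : ¬IsOneOrPrime e) : e = p * q := by
  obtain ⟨a, b, ha, hb, rfl⟩ := Nat.dvd_mul.mp he
  rcases hp.eq_one_or_self_of_dvd a ha with rfl | rfl <;>
    rcases hq.eq_one_or_self_of_dvd b hb with rfl | rfl <;>
    simp_all [IsOneOrPrime]

lemma exists_prime_mul_dvd_of_not_isOneOrPrime {n : ℕ} (h : ¬IsOneOrPrime n) :
    ∃ p q, p.Prime ∧ q.Prime ∧ p * q ∣ n := by
  have hn : n ≠ 1 := fun h1 => h (Or.inl h1)
  have hpn : n.minFac ∣ n := Nat.minFac_dvd n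
  have hq : n / n.minFac ≠ 1 := by
    intro h1
    apply h
    right
    rw [← Nat.div_mul_cancel hpn, h1, one_mul]
    exact Nat.minFac_prime hn
  refine ⟨n.minFac, (n / n.minFac).minFac, Nat.minFac_prime hn, Nat.minFac_prime hq, ?_⟩
  calc n.minFac * (n / n.minFac).minFac ∣ n.minFac * (n / n.minFac) :=
        mul_dvd_mul_left _ (Nat.minFac_dvd _)
    _ = n := Nat.mul_div_cancel' hpn

def PairwiseGcdNotOneOrPrime (S : Set ℕ) : Prop :=
  ∀ m ∈ S, ∀ n ∈ S, ¬IsOneOrPrime m → ¬IsOneOrPrime n → ¬IsOneOrPrime (m.gcd n)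

namespace PairwiseGcdNotOneOrPrime

variable {S : Set ℕ} {p q m : ℕ}

lemma mul_dvd (hS : PairwiseGcdNotOneOrPrime S) (hp : p.Prime) (hq : q.Prime) (hpq : p * q ∈ S)
    (hm : m ∈ S) (hm' : ¬IsOneOrPrime m) : p * q ∣ m :=
  Nat.gcd_eq_right_iff_dvd.mp <| eq_mul_of_dvd_mul_of_not_isOneOrPrime hp hq
    (Nat.gcd_dvd_right _ _) (hS m hm _ hpq hm' (not_isOneOrPrime_mul hp hq))

lemma mul_eq_mul (hS : PairwiseGcdNotOneOrPrime S) (hp : p.Prime) (hq : q.Prime)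
    (hpq : p * q ∈ S) {r s : ℕ} (hr : r.Prime) (hs : s.Prime) (hrs : r * s ∈ S) :
    r * s = p * q :=
  (eq_mul_of_dvd_mul_of_not_isOneOrPrime hr hs
    (hS.mul_dvd hp hq hpq hrs (not_isOneOrPrime_mul hr hs)) (not_isOneOrPrime_mul hp hq)).symm

lemma exists_eq_pow (hS : PairwiseGcdNotOneOrPrime S) (hdvd : ∀ n ∈ S, ∀ d, d ∣ n → d ∈ S)
    (hp : p.Prime) (hpp : p * p ∈ S) (hm : m ∈ S) (hm0 : m ≠ 0) (hm' : ¬IsOneOrPrime m) :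
    ∃ k, 2 ≤ k ∧ m = p ^ k := by
  have hppm : p * p ∣ m := hS.mul_dvd hp hp hpp hm hm'
  have hprime : ∀ {r : ℕ}, r.Prime → r ∣ m → r = p := by
    intro r hr hrm
    by_contra hrp
    have hrpm : r * p ∣ m := ((Nat.coprime_primes hr hp).mpr hrp).mul_dvd_of_dvd_of_dvd hrm
      ((dvd_mul_right p p).trans hppm)
    exact hrp <| Nat.eq_of_mul_eq_mul_right hp.pos <|
      hS.mul_eq_mul hp hp hpp hr hp (hdvd m hm _ hrpm)
  have hmk := Nat.eq_prime_pow_of_unique_prime_dvd hm0 hprime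
  refine ⟨_, (Nat.pow_dvd_pow_iff_le_right hp.one_lt).mp ?_, hmk⟩
  rwa [sq, ← hmk]

lemma eq_mul (hS : PairwiseGcdNotOneOrPrime S) (hdvd : ∀ n ∈ S, ∀ d, d ∣ n → d ∈ S)
    (hp : p.Prime) (hq : q.Prime) (hne : p ≠ q) (hpq : p * q ∈ S) (hm : m ∈ S)
    (hm' : ¬IsOneOrPrime m) : m = p * q := by
  obtain ⟨t, rfl⟩ := hS.mul_dvd hp hq hpq hm hm'
  suffices t = 1 by rw [this, mul_one]
  by_contra ht
  have hr : t.minFac.Prime := Nat.minFac_prime ht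
  have hrt : t.minFac ∣ t := Nat.minFac_dvd t
  have hrq : p * t.minFac = p * q := hS.mul_eq_mul hp hq hpq hp hr
    (hdvd _ hm _ (mul_dvd_mul (dvd_mul_right p q) hrt))
  have hrp : q * t.minFac = q * p := (mul_comm p q) ▸ hS.mul_eq_mul hp hq hpq hq hr
    (hdvd _ hm _ (mul_dvd_mul (dvd_mul_left q p) hrt))
  exact hne <| (Nat.eq_of_mul_eq_mul_left hq.pos hrp).symm.trans
    (Nat.eq_of_mul_eq_mul_left hp.pos hrq)

end PairwiseGcdNotOneOrPrime

theorem pairwiseGcdNotOneOrPrime_iff {S : Set ℕ} (hdvd : ∀ n ∈ S, ∀ d, d ∣ n → d ∈ S)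
    (h0 : 0 ∉ S) :
    PairwiseGcdNotOneOrPrime S ↔
      (∀ n ∈ S, IsOneOrPrime n) ∨
        (∃ p : ℕ, p.Prime ∧ ∀ n ∈ S, ¬IsOneOrPrime n → ∃ k : ℕ, 2 ≤ k ∧ n = p ^ k) ∨
        (∃ p q : ℕ, p.Prime ∧ q.Prime ∧ p ≠ q ∧ ∀ n ∈ S, ¬IsOneOrPrime n → n = p * q) := by
  constructor
  · intro hS
    by_cases hall : ∀ n ∈ S, IsOneOrPrime n
    · exact Or.inl hall
    push Not at hall
    obtain ⟨n₀, hn₀, hn₀'⟩ := hall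
    obtain ⟨p, q, hp, hq, hpq⟩ := exists_prime_mul_dvd_of_not_isOneOrPrime hn₀'
    have hpqS : p * q ∈ S := hdvd n₀ hn₀ _ hpq
    right
    rcases eq_or_ne p q with rfl | hne
    · exact Or.inl ⟨p, hp, fun m hm hm' =>
        hS.exists_eq_pow hdvd hp hpqS hm (ne_of_mem_of_not_mem hm h0) hm'⟩
    · exact Or.inr ⟨p, q, hp, hq, hne, fun m hm hm' => hS.eq_mul hdvd hp hq hne hpqS hm hm'⟩
  · rintro (h | ⟨p, hp, h⟩ | ⟨p, q, hp, hq, -, h⟩) m hm n hn hm' hn'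
    · exact absurd (h m hm) hm'
    · obtain ⟨k, hk, rfl⟩ := h m hm hm'
      obtain ⟨l, hl, rfl⟩ := h n hn hn'
      have hdvd : p ^ 2 ∣ (p ^ k).gcd (p ^ l) :=
        Nat.dvd_gcd (pow_dvd_pow p hk) (pow_dvd_pow p hl)
      rw [sq] at hdvd
      exact fun hg => not_isOneOrPrime_mul hp hp (hg.of_dvd hdvd)
    · rw [h m hm hm', h n hn hn', Nat.gcd_self]
      exact not_isOneOrPrime_mul hp hq

lemma isSplit_of_isClique_of_isIndepSet {V : Type*} [Nontrivial V] {Γ : SimpleGraph V}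
    {K : Set V} (hK : Γ.IsClique K) (hI : IsIndepSet Γ Kᶜ) : IsSplit Γ := by
  obtain ⟨a, b, hab⟩ := exists_pair_ne V
  rcases K.eq_empty_or_nonempty with rfl | hKne
  · refine ⟨{a}, {a}ᶜ, Set.singleton_nonempty a, ⟨b, hab.symm⟩, disjoint_compl_right,
      Set.union_compl_self _, Set.pairwise_singleton _ _,
      fun _ _ _ _ => hI (Set.notMem_empty _) (Set.notMem_empty _)⟩
  rcases Kᶜ.eq_empty_or_nonempty with hc | hc
  · refine ⟨{a}ᶜ, {a}, ⟨b, hab.symm⟩, Set.singleton_nonempty a, disjoint_compl_left,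
      Set.compl_union_self _, hK.subset ?_, Set.pairwise_singleton _ _⟩
    simp [Set.compl_empty_iff.mp hc]
  · exact ⟨K, Kᶜ, hKne, hc, disjoint_compl_right, Set.union_compl_self K, hK, hI⟩

lemma primeCoprimeGraph_adj_of_isOneOrPrime {G : Type*} [Monoid G] {g h : G} (hne : g ≠ h)
    (hg : IsOneOrPrime (orderOf g)) : (primeCoprimeGraph G).Adj g h :=
  ⟨hne, hg.of_dvd (Nat.gcd_dvd_left _ _)⟩

lemma isSplit_primeCoprimeGraph_of_pairwiseGcdNotOneOrPrime {G : Type*} [Monoid G] [Nontrivial G]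
    (h : PairwiseGcdNotOneOrPrime (Set.range (orderOf : G → ℕ))) :
    IsSplit (primeCoprimeGraph G) :=
  isSplit_of_isClique_of_isIndepSet (K := {g | IsOneOrPrime (orderOf g)})
    (fun _ hg _ _ hne => primeCoprimeGraph_adj_of_isOneOrPrime hne hg)
    (fun g hg g' hg' _ hadj => h _ ⟨g, rfl⟩ _ ⟨g', rfl⟩ hg hg' hadj.2)

lemma IsSplit.pairwiseGcdNotOneOrPrime_range_orderOf {G : Type*} [Group G]
    (hsplit : IsSplit (primeCoprimeGraph G)) :
    PairwiseGcdNotOneOrPrime (Set.range (orderOf : G → ℕ)) := by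
  obtain ⟨K, I, -, -, -, hcover, hK, hI⟩ := hsplit
  have hmemI : ∀ x : G, ¬IsOneOrPrime (orderOf x) → ∃ y ∈ I, orderOf y = orderOf x := by
    intro x hx
    have hne : x ≠ x⁻¹ := fun h => hx <| IsOneOrPrime.of_dvd (Or.inr Nat.prime_two) <|
      orderOf_dvd_of_pow_eq_one (by rw [sq, mul_eq_one_iff_eq_inv]; exact h)
    have hnadj : ¬(primeCoprimeGraph G).Adj x x⁻¹ := fun hadj =>
      hx (by simpa only [IsOneOrPrime, orderOf_inv, Nat.gcd_self] using hadj.2)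
    have hKI : ∀ y, y ∈ K ∨ y ∈ I := fun y => Set.eq_univ_iff_forall.mp hcover y
    rcases hKI x, hKI x⁻¹ with ⟨hxK | hxI, hx'K | hx'I⟩
    · exact absurd (hK hxK hx'K hne) hnadj
    · exact ⟨x⁻¹, hx'I, orderOf_inv x⟩
    all_goals exact ⟨x, hxI, rfl⟩
  rintro _ ⟨g, rfl⟩ _ ⟨h, rfl⟩ hg hh hgh
  obtain ⟨g', hg'I, hg'⟩ := hmemI g hg
  obtain ⟨h', hh'I, hh'⟩ := hmemI h hh
  rw [← hg', ← hh'] at hgh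
  by_cases heq : g' = h'
  · subst heq
    rw [Nat.gcd_self, hg'] at hgh
    exact hg hgh
  · exact hI hg'I hh'I heq ⟨heq, hgh⟩

theorem split_iff (G : Type*) [Group G] [Fintype G] [Nontrivial G] :
    IsSplit (primeCoprimeGraph G) ↔
      ((∀ g : G, orderOf g = 1 ∨ (orderOf g).Prime) ∨
        (∃ p : ℕ, p.Prime ∧ ∀ g : G, ¬(orderOf g = 1 ∨ (orderOf g).Prime) →
          ∃ k : ℕ, 2 ≤ k ∧ orderOf g = p ^ k) ∨
        (∃ p q : ℕ, p.Prime ∧ q.Prime ∧ p ≠ q ∧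
          ∀ g : G, ¬(orderOf g = 1 ∨ (orderOf g).Prime) → orderOf g = p * q)) := by
  have hdvd : ∀ n ∈ Set.range (orderOf : G → ℕ), ∀ d, d ∣ n → d ∈ Set.range (orderOf : G → ℕ) := by
    rintro _ ⟨g, rfl⟩ d hd
    exact ⟨_, orderOf_pow_orderOf_div (orderOf_pos g).ne' hd⟩
  have h0 : 0 ∉ Set.range (orderOf : G → ℕ) := fun ⟨g, hg⟩ => (orderOf_pos g).ne' hg
  calc IsSplit (primeCoprimeGraph G)
      ↔ PairwiseGcdNotOneOrPrime (Set.range (orderOf : G → ℕ)) :=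
        ⟨IsSplit.pairwiseGcdNotOneOrPrime_range_orderOf,
          isSplit_primeCoprimeGraph_of_pairwiseGcdNotOneOrPrime⟩
    _ ↔ _ := pairwiseGcdNotOneOrPrime_iff hdvd h0
    _ ↔ _ := by simp only [Set.forall_mem_range, IsOneOrPrime]
end

section
/- Let G be a finite group. If the prime-coprime graph Θ(G) is a split graph, then Θ(G) is a complete split graph, i.e., there is a partition of G into a clique K and an independent set I such that every vertex of K is adjacent to every vertex of I. -/
/-!
Call an element *small* if its order is `1` or a prime; such an element is adjacent to every
other vertex of `Θ(G)`. An element `x` that is not small satisfies `x ≠ x⁻¹` and is not adjacent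
to `x⁻¹`, so in a split partition `(K, I)` one of `x, x⁻¹` lies in `I`: every order of a non-small
element occurs in `I`. As adjacency depends only on the orders, the non-small elements then form an
independent set, and taking it as `I` and the small elements as `K` gives a complete split
partition. If every element is small, `Θ(G)` is complete and any single vertex serves as `I`.
-/

lemma Nat.gcd_eq_one_or_prime_of_left {p : ℕ} (q : ℕ) (hp : p = 1 ∨ p.Prime) :
    Nat.gcd p q = 1 ∨ (Nat.gcd p q).Prime := by
  rcases hp with rfl | hp
  · exact Or.inl (Nat.gcd_one_left q)
  · rcases hp.eq_one_or_self_of_dvd _ (Nat.gcd_dvd_left p q) with h | h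
    · exact Or.inl h
    · exact Or.inr (by rw [h]; exact hp)

lemma orderOf_eq_one_or_prime_of_eq_inv {G : Type*} [Group G] {x : G} (hx : x = x⁻¹) :
    orderOf x = 1 ∨ (orderOf x).Prime := by
  have hdvd : orderOf x ∣ 2 :=
    orderOf_dvd_of_pow_eq_one (by rw [pow_two]; exact eq_inv_iff_mul_eq_one.mp hx)
  rcases (Nat.dvd_prime Nat.prime_two).mp hdvd with h | h
  · exact Or.inl h
  · exact Or.inr (h ▸ Nat.prime_two)

lemma SimpleGraph.IsClique.notMem_or_notMem_of_not_adj {V : Type*} {Γ : SimpleGraph V}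
    {K : Set V} (hK : Γ.IsClique K) {x y : V} (hxy : x ≠ y) (hn : ¬Γ.Adj x y) :
    x ∉ K ∨ y ∉ K := by
  by_contra! h
  exact hn (hK h.1 h.2 hxy)

def IsCompleteSplit {V : Type*} (Γ : SimpleGraph V) : Prop :=
  ∃ K I : Set V, K.Nonempty ∧ I.Nonempty ∧ Disjoint K I ∧ K ∪ I = Set.univ ∧
    Γ.IsClique K ∧ IsIndepSet Γ I ∧ ∀ x ∈ K, ∀ y ∈ I, Γ.Adj x y

lemma isCompleteSplit_of_forall_adj_of_notMem {V : Type*} {Γ : SimpleGraph V} {I : Set V}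
    (hI : I.Nonempty) (hIc : Iᶜ.Nonempty) (hIndep : IsIndepSet Γ I)
    (hadj : ∀ x ∉ I, ∀ y, x ≠ y → Γ.Adj x y) : IsCompleteSplit Γ :=
  ⟨Iᶜ, I, hIc, hI, disjoint_compl_left, Set.compl_union_self I,
    fun x hx y _ hxy => hadj x hx y hxy,
    hIndep, fun x hx y hy => hadj x hx y fun h => hx (h ▸ hy)⟩

namespace primeCoprimeGraph

variable {G : Type*} [Group G]

lemma adj_of_orderOf_eq_one_or_prime {g h : G} (hg : orderOf g = 1 ∨ (orderOf g).Prime)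
    (hne : g ≠ h) : (primeCoprimeGraph G).Adj g h :=
  ⟨hne, Nat.gcd_eq_one_or_prime_of_left _ hg⟩

lemma not_adj_of_orderOf_eq {g h : G} (hg : ¬(orderOf g = 1 ∨ (orderOf g).Prime))
    (hgh : orderOf g = orderOf h) : ¬(primeCoprimeGraph G).Adj g h := by
  rintro ⟨-, hgcd⟩
  rw [← hgh, Nat.gcd_self] at hgcd
  exact hg hgcd

section SplitPartition

variable {K I : Set G} (hcover : K ∪ I = Set.univ) (hK : (primeCoprimeGraph G).IsClique K)
include hcover hK

lemma exists_mem_orderOf_eq {x : G} (hx : ¬(orderOf x = 1 ∨ (orderOf x).Prime)) :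
    ∃ y ∈ I, orderOf y = orderOf x := by
  have hne : x ≠ x⁻¹ := fun h => hx (orderOf_eq_one_or_prime_of_eq_inv h)
  have hnadj := not_adj_of_orderOf_eq hx (orderOf_inv x).symm
  have hmem (z : G) (hz : z ∉ K) : z ∈ I :=
    (hcover ▸ Set.mem_univ z : z ∈ K ∪ I).resolve_left hz
  rcases hK.notMem_or_notMem_of_not_adj hne hnadj with h | h
  · exact ⟨x, hmem x h, rfl⟩
  · exact ⟨x⁻¹, hmem _ h, orderOf_inv x⟩

lemma isIndepSet_setOf_not_orderOf_eq_one_or_prime (hI : IsIndepSet (primeCoprimeGraph G) I) :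
    IsIndepSet (primeCoprimeGraph G) {g : G | ¬(orderOf g = 1 ∨ (orderOf g).Prime)} := by
  intro a ha b hb hab ⟨_, hgcd⟩
  obtain ⟨a', ha'I, ha'⟩ := exists_mem_orderOf_eq hcover hK ha
  obtain ⟨b', hb'I, hb'⟩ := exists_mem_orderOf_eq hcover hK hb
  have hne : a' ≠ b' := fun h => not_adj_of_orderOf_eq ha (by rw [← ha', ← hb', h]) ⟨hab, hgcd⟩
  exact hI ha'I hb'I hne ⟨hne, by rwa [ha', hb']⟩

end SplitPartition

end primeCoprimeGraph

open primeCoprimeGraph in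
theorem split_implies_complete_split_general (G : Type*) [Group G]
    (h : IsSplit (primeCoprimeGraph G)) :
    ∃ K I : Set G, K.Nonempty ∧ I.Nonempty ∧ Disjoint K I ∧ K ∪ I = Set.univ ∧
      (primeCoprimeGraph G).IsClique K ∧ IsIndepSet (primeCoprimeGraph G) I ∧
      ∀ x ∈ K, ∀ y ∈ I, (primeCoprimeGraph G).Adj x y := by
  obtain ⟨K, I, ⟨u, hu⟩, ⟨v, hv⟩, hdisj, hcover, hK, hI⟩ := h
  set C : Set G := {g | ¬(orderOf g = 1 ∨ (orderOf g).Prime)}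
  by_cases hC : C.Nonempty
  · exact isCompleteSplit_of_forall_adj_of_notMem hC ⟨1, not_not.mpr (Or.inl orderOf_one)⟩
      (isIndepSet_setOf_not_orderOf_eq_one_or_prime hcover hK hI)
      fun x hx y hxy => adj_of_orderOf_eq_one_or_prime (not_not.mp hx) hxy
  · have hsmall (x : G) : orderOf x = 1 ∨ (orderOf x).Prime := not_not.mp fun hx => hC ⟨x, hx⟩
    exact isCompleteSplit_of_forall_adj_of_notMem (I := {v}) ⟨v, rfl⟩ ⟨u, hdisj.ne_of_mem hu hv⟩
      (Set.pairwise_singleton v _) fun x _ y hxy => adj_of_orderOf_eq_one_or_prime (hsmall x) hxy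

theorem split_implies_complete_split (G : Type*) [Group G] [Fintype G]
    (h : IsSplit (primeCoprimeGraph G)) :
    ∃ K I : Set G, K.Nonempty ∧ I.Nonempty ∧ Disjoint K I ∧ K ∪ I = Set.univ ∧
      (primeCoprimeGraph G).IsClique K ∧ IsIndepSet (primeCoprimeGraph G) I ∧
      ∀ x ∈ K, ∀ y ∈ I, (primeCoprimeGraph G).Adj x y :=
  split_implies_complete_split_general G h
end

section
/- Let G be a finite group of order n, and let d be a semiprime divisor of n (i.e., d = pq for primes p, q, possibly equal, and d divides n). If the set I_d(G) = {g ∈ G : d divides the order of g} is nonempty, then I_d(G) is a maximal independent set of the prime-coprime graph Θ(G), i.e., I_d(G) is an independent set and no proper superset of it is independent. -/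
/-!
The gcd of two orders divisible by `d = p * q` is divisible by `d`, hence is neither `1` nor a
prime, so `I_d(G)` is independent. Conversely, a power of an element of `I_d(G)` has order exactly
`d`; for `x ∉ I_d(G)` the gcd of `|x|` and `d` is a proper divisor of `p * q`, i.e. `1` or a prime,
so `x` is adjacent to that power and cannot be added to `I_d(G)`.
-/

namespace Nat

theorem not_mul_dvd_of_eq_one_or_prime {p q m : ℕ} (hp : p.Prime) (hq : q.Prime)
    (hm : m = 1 ∨ m.Prime) : ¬ p * q ∣ m := by
  intro hdvd
  have hpq : p * q ≠ 1 := (one_lt_mul'' hp.one_lt hq.one_lt).ne'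
  rcases hm with rfl | hm
  · exact hpq (Nat.eq_one_of_dvd_one hdvd)
  · rcases hm.eq_one_or_self_of_dvd _ hdvd with h1 | hself
    · exact hpq h1
    · exact Nat.not_prime_mul hp.ne_one hq.ne_one (hself ▸ hm)

theorem eq_one_or_prime_of_dvd_mul {p q m : ℕ} (hp : p.Prime) (hq : q.Prime)
    (hm : m ∣ p * q) (hpq : ¬ p * q ∣ m) : m = 1 ∨ m.Prime := by
  obtain ⟨a, b, hap, hbq, rfl⟩ := Nat.dvd_mul.mp hm
  rcases hp.eq_one_or_self_of_dvd _ hap with rfl | rfl <;>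
    rcases hq.eq_one_or_self_of_dvd _ hbq with rfl | rfl
  · exact Or.inl rfl
  · exact Or.inr (by rwa [one_mul])
  · exact Or.inr (by rwa [mul_one])
  · exact absurd dvd_rfl hpq

end Nat

section PrimeCoprimeGraph

variable {G : Type*} {p q : ℕ}

theorem isIndepSet_setOf_mul_dvd_orderOf [Monoid G] (hp : p.Prime) (hq : q.Prime) :
    IsIndepSet (primeCoprimeGraph G) {g : G | p * q ∣ orderOf g} := by
  rintro a ha b hb - ⟨-, hab⟩
  exact Nat.not_mul_dvd_of_eq_one_or_prime hp hq hab (Nat.dvd_gcd ha hb)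

theorem primeCoprimeGraph_adj_of_orderOf_eq_mul [Monoid G] (hp : p.Prime) (hq : q.Prime)
    {x h : G} (hh : orderOf h = p * q) (hx : ¬ p * q ∣ orderOf x) :
    (primeCoprimeGraph G).Adj x h := by
  refine ⟨?_, Nat.eq_one_or_prime_of_dvd_mul hp hq (hh ▸ Nat.gcd_dvd_right _ _)
    fun hdvd => hx (hdvd.trans (Nat.gcd_dvd_left _ _))⟩
  rintro rfl
  exact hx hh.symm.dvd

theorem eq_setOf_mul_dvd_orderOf_of_isIndepSet [LeftCancelMonoid G] [Finite G]
    (hp : p.Prime) (hq : q.Prime) (hne : {g : G | p * q ∣ orderOf g}.Nonempty) {s : Set G}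
    (hs : IsIndepSet (primeCoprimeGraph G) s) (hsub : {g : G | p * q ∣ orderOf g} ⊆ s) :
    s = {g : G | p * q ∣ orderOf g} := by
  obtain ⟨g, hg⟩ := hne
  have hh : orderOf (g ^ (orderOf g / (p * q))) = p * q :=
    orderOf_pow_orderOf_div (orderOf_pos g).ne' hg
  have hhI : g ^ (orderOf g / (p * q)) ∈ {g : G | p * q ∣ orderOf g} := hh.symm.dvd
  refine Set.Subset.antisymm (fun x hxs => ?_) hsub
  by_contra hx
  have hadj := primeCoprimeGraph_adj_of_orderOf_eq_mul hp hq hh hx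
  exact hs hxs (hsub hhI) hadj.ne hadj

end PrimeCoprimeGraph

theorem Id_maximal_indep_general (G : Type*) [Group G] [Fintype G] (d : ℕ)
    (hd : ∃ p q : ℕ, p.Prime ∧ q.Prime ∧ d = p * q)
    (hne : {g : G | d ∣ orderOf g}.Nonempty) :
    IsIndepSet (primeCoprimeGraph G) {g : G | d ∣ orderOf g} ∧
      ∀ s : Set G, IsIndepSet (primeCoprimeGraph G) s →
        {g : G | d ∣ orderOf g} ⊆ s → s = {g : G | d ∣ orderOf g} := by
  obtain ⟨p, q, hp, hq, rfl⟩ := hd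
  exact ⟨isIndepSet_setOf_mul_dvd_orderOf hp hq,
    fun _ hs hsub => eq_setOf_mul_dvd_orderOf_of_isIndepSet hp hq hne hs hsub⟩

theorem Id_maximal_indep (G : Type*) [Group G] [Fintype G] (d : ℕ)
    (hd : ∃ p q : ℕ, p.Prime ∧ q.Prime ∧ d = p * q) (hdvd : d ∣ Fintype.card G)
    (hne : {g : G | d ∣ orderOf g}.Nonempty) :
    IsIndepSet (primeCoprimeGraph G) {g : G | d ∣ orderOf g} ∧
      ∀ s : Set G, IsIndepSet (primeCoprimeGraph G) s →
        {g : G | d ∣ orderOf g} ⊆ s → s = {g : G | d ∣ orderOf g} :=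
  Id_maximal_indep_general G d hd hne
end

section
/- Let n be a squarefree composite positive integer with prime factorization n = p_1 p_2 ⋯ p_t, where p_1 < p_2 < ⋯ < p_t are distinct primes and t ≥ 2. Then the independence number of the prime-coprime graph of Z_n satisfies α(Θ(Z_n)) ≥ (p_{t−1} − 1)(p_t − 1) · Π_{r=1}^{t−2} p_r. -/
/-!
Write `n = m * q` with `q = p_{t-1} * p_t`. Elements of `ℤ/n` whose orders are all divisible by `q`
are pairwise nonadjacent in the prime-coprime graph: the gcd of two such orders is a multiple of
`q`, hence neither `1` nor a prime. Under `ℤ/n ≅ ℤ/m × ℤ/q`, every pair `(c, u)` with `u` a unit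
of `ℤ/q` has order divisible by `q`, which gives `m * φ(q) = m (p_{t-1} - 1)(p_t - 1)` of them.
-/

open Finset

theorem IsIndepSet.card_le_indepNum {V : Type*} [Fintype V] {Γ : SimpleGraph V} {s : Finset V}
    (hs : IsIndepSet Γ s) : #s ≤ indepNum Γ := by
  classical
  exact Finset.le_sup_of_le (mem_univ s) (by rw [if_pos hs])

theorem isIndepSet_primeCoprimeGraph_of_dvd_orderOf {G : Type*} [Monoid G] {q : ℕ}
    (hq₁ : q ≠ 1) (hq : ¬ q.Prime) {s : Set G} (hs : ∀ x ∈ s, q ∣ orderOf x) :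
    IsIndepSet (primeCoprimeGraph G) s := by
  rintro x hx y hy - ⟨-, hxy⟩
  have hdvd : q ∣ (orderOf x).gcd (orderOf y) := Nat.dvd_gcd (hs x hx) (hs y hy)
  rcases hxy with h | h
  · exact hq₁ (Nat.dvd_one.1 (h ▸ hdvd))
  · rcases (Nat.dvd_prime h).1 hdvd with h' | h'
    · exact hq₁ h'
    · exact hq (h' ▸ h)

theorem addOrderOf_coe_units {R : Type*} [Semiring R] (u : Rˣ) :
    addOrderOf (u : R) = addOrderOf (1 : R) := by
  simpa using addOrderOf_injective (AddMonoidHom.mulLeft (u : R)) u.isUnit.mul_right_injective 1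

theorem Nat.coprime_prod_prod_of_disjoint {ι : Type*} {p : ι → ℕ} (hp : ∀ i, (p i).Prime)
    (hinj : Function.Injective p) {s s' : Finset ι} (h : Disjoint s s') :
    (∏ i ∈ s, p i).Coprime (∏ i ∈ s', p i) :=
  Nat.Coprime.prod_left fun i hi => Nat.Coprime.prod_right fun j hj =>
    (Nat.coprime_primes (hp i) (hp j)).2 <| hinj.ne fun hij => disjoint_left.1 h hi (hij ▸ hj)

theorem ZMod.mul_totient_le_card_filter_dvd_addOrderOf {n m q : ℕ} [NeZero n] (hn : n = m * q)
    (h : m.Coprime q) : m * q.totient ≤ #{x : ZMod n | q ∣ addOrderOf x} := by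
  have : NeZero m := ⟨fun hm => NeZero.ne n (by simp [hn, hm])⟩
  have : NeZero q := ⟨fun hq => NeZero.ne n (by simp [hn, hq])⟩
  let e : ZMod n ≃+ ZMod m × ZMod q :=
    ((ZMod.ringEquivCongr hn).trans (ZMod.chineseRemainder h)).toAddEquiv
  let f : ZMod m × (ZMod q)ˣ ↪ ZMod n :=
    ⟨fun x => e.symm (x.1, x.2), fun x y hxy => by simpa [Prod.ext_iff, Units.ext_iff] using hxy⟩
  calc m * q.totient = #(univ.map f) := by simp [ZMod.card_units_eq_totient]
    _ ≤ _ := by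
      refine card_le_card fun x hx => ?_
      obtain ⟨⟨c, u⟩, -, rfl⟩ := mem_map.1 hx
      refine mem_filter.2 ⟨mem_univ _, ?_⟩
      change q ∣ addOrderOf (e.symm (c, u))
      rw [AddEquiv.addOrderOf_eq, Prod.addOrderOf_mk, addOrderOf_coe_units, ZMod.addOrderOf_one]
      exact Nat.dvd_lcm_right _ _

theorem indepNum_cyclic_squarefree_lower_bound (n t : ℕ) [NeZero n] (ht : 2 ≤ t)
    (p : Fin t → ℕ) (hp : ∀ r, (p r).Prime) (hmono : StrictMono p)
    (hn : n = ∏ r, p r) :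
    (p ⟨t - 2, by omega⟩ - 1) * (p ⟨t - 1, by omega⟩ - 1) *
        ∏ r ∈ Finset.univ.filter (fun r : Fin t => (r : ℕ) < t - 2), p r ≤
      indepNum (primeCoprimeGraph (Multiplicative (ZMod n))) := by
  classical
  set a : Fin t := ⟨t - 2, by omega⟩
  set b : Fin t := ⟨t - 1, by omega⟩
  set m := ∏ r ∈ univ.filter (fun r : Fin t => (r : ℕ) < t - 2), p r
  have hab : a ≠ b := by simp [a, b, Fin.ext_iff]; omega
  have hrest : univ.filter (fun r : Fin t => ¬ (r : ℕ) < t - 2) = {a, b} := by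
    ext r; simp [a, b, Fin.ext_iff]; omega
  have hnm : n = m * (p a * p b) := by
    rw [hn, ← prod_filter_mul_prod_filter_not univ (fun r : Fin t => (r : ℕ) < t - 2), hrest,
      prod_pair hab]
  have hcop : m.Coprime (p a * p b) := by
    rw [← prod_pair hab, ← hrest]
    exact Nat.coprime_prod_prod_of_disjoint hp hmono.injective (disjoint_filter_filter_not _ _ _)
  have htot : (p a * p b).totient = (p a - 1) * (p b - 1) := by
    rw [Nat.totient_mul ((Nat.coprime_primes (hp a) (hp b)).2 (hmono.injective.ne hab)),
      Nat.totient_prime (hp a), Nat.totient_prime (hp b)]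
  calc _ = m * (p a * p b).totient := by rw [htot, mul_comm]
    _ ≤ #{x : ZMod n | p a * p b ∣ addOrderOf x} :=
      ZMod.mul_totient_le_card_filter_dvd_addOrderOf hnm hcop
    _ = #{x : Multiplicative (ZMod n) | p a * p b ∣ orderOf x} :=
      card_equiv Multiplicative.ofAdd (by simp [orderOf_ofAdd_eq_addOrderOf])
    _ ≤ _ := IsIndepSet.card_le_indepNum <| isIndepSet_primeCoprimeGraph_of_dvd_orderOf
      (one_lt_mul'' (hp a).one_lt (hp b).one_lt).ne'
      (Nat.not_prime_mul (hp a).ne_one (hp b).ne_one) (by simp)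
end

section
/- Let n = pq, where p and q are distinct primes. Then the independence number of the prime-coprime graph of the cyclic group Z_n equals (p − 1)(q − 1). -/
theorem indepNum_cyclic_pq (n p q : ℕ) [NeZero n] (hp : p.Prime) (hq : q.Prime)
    (hpq : p ≠ q) (hn : n = p * q) :
    indepNum (primeCoprimeGraph (Multiplicative (ZMod n))) = (p - 1) * (q - 1) := by
  classical
  set G := Multiplicative (ZMod n)
  have hcard : Fintype.card G = n := by
    simpa [G] using ZMod.card n
  have horder : ∀ g : G, orderOf g ∣ p * q := fun g => by
    have h := orderOf_dvd_card (G := G) (x := g)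
    rw [hcard] at h
    exact hn ▸ h
  have hnp : ¬ (p * q).Prime := by
    rw [Nat.prime_mul_iff]
    rintro (⟨-, h⟩ | ⟨-, h⟩)
    · exact hq.one_lt.ne' h
    · exact hp.one_lt.ne' h
  have hcop : Nat.Coprime p q := (Nat.coprime_primes hp hq).mpr hpq
  -- classification of divisors of p*q
  have hdvd : ∀ d : ℕ, d ∣ p * q → d = 1 ∨ d = p ∨ d = q ∨ d = p * q := by
    intro d hd
    by_cases hdp : p ∣ d <;> by_cases hdq : q ∣ d
    · right; right; right
      exact Nat.dvd_antisymm hd (Nat.Coprime.mul_dvd_of_dvd_of_dvd hcop hdp hdq)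
    · right; left
      have hcdq : Nat.Coprime d q := ((hq.coprime_iff_not_dvd).mpr hdq).symm
      exact Nat.dvd_antisymm (hcdq.dvd_of_dvd_mul_right hd) hdp
    · right; right; left
      have hcdp : Nat.Coprime d p := ((hp.coprime_iff_not_dvd).mpr hdp).symm
      exact Nat.dvd_antisymm (hcdp.dvd_of_dvd_mul_left hd) hdq
    · left
      have hcdp : Nat.Coprime d p := ((hp.coprime_iff_not_dvd).mpr hdp).symm
      have hcdq : Nat.Coprime d q := ((hq.coprime_iff_not_dvd).mpr hdq).symm
      exact hcdp.eq_one_of_dvd (hcdq.dvd_of_dvd_mul_right hd)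
  -- nonadjacent distinct elements have full order
  have hkey : ∀ g h : G, g ≠ h → ¬ (primeCoprimeGraph G).Adj g h → orderOf g = n := by
    intro g h hne hadj
    have hnot : ¬ (Nat.gcd (orderOf g) (orderOf h) = 1 ∨
        (Nat.gcd (orderOf g) (orderOf h)).Prime) := fun hd => hadj ⟨hne, hd⟩
    push_neg at hnot
    set d := Nat.gcd (orderOf g) (orderOf h) with hdd
    have hddvd : d ∣ p * q := (Nat.gcd_dvd_left _ _).trans (horder g)
    rcases hdvd d hddvd with h1 | h2 | h3 | h4
    · exact absurd h1 hnot.1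
    · exact absurd (h2 ▸ hp) hnot.2
    · exact absurd (h3 ▸ hq) hnot.2
    · have hle : p * q ∣ orderOf g := h4 ▸ Nat.gcd_dvd_left _ _
      exact (Nat.dvd_antisymm (horder g) hle).trans hn.symm
  -- the set of elements of full order
  set T : Finset G := Finset.univ.filter (fun g => orderOf g = n) with hT
  have hTcard : T.card = (p - 1) * (q - 1) := by
    have hdvd' : n ∣ Fintype.card G := by rw [hcard]
    have := IsCyclic.card_orderOf_eq_totient (α := G) hdvd'
    have hTot : Nat.totient n = (p - 1) * (q - 1) := by
      rw [hn, Nat.totient_mul hcop, Nat.totient_prime hp, Nat.totient_prime hq]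
    rw [hT, ← hTot, ← this]
  have hTind : IsIndepSet (primeCoprimeGraph G) (T : Set G) := by
    intro a ha b hb hab hadj
    simp only [hT, Finset.coe_filter, Set.mem_setOf_eq] at ha hb
    obtain ⟨-, ha⟩ := ha
    obtain ⟨-, hb⟩ := hb
    rcases hadj.2 with h1 | h2
    · rw [ha, hb, Nat.gcd_self, hn] at h1
      have := hp.two_le; have := hq.two_le; nlinarith
    · rw [ha, hb, Nat.gcd_self, hn] at h2
      exact hnp h2
  have hp2 := hp.two_le
  have hq2 := hq.two_le
  have hone : 1 ≤ (p - 1) * (q - 1) := Nat.mul_pos (by omega) (by omega)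
  rw [indepNum]
  apply le_antisymm
  · apply Finset.sup_le
    intro s _
    split_ifs with hs
    · by_cases hcard1 : s.card ≤ 1
      · exact hcard1.trans hone
      · have hsub : s ⊆ T := by
          intro g hg
          obtain ⟨h, hh, hne⟩ := Finset.exists_mem_ne (s := s) (by omega) g
          rw [hT, Finset.mem_filter]
          refine ⟨Finset.mem_univ _, hkey g h (Ne.symm hne) ?_⟩
          exact hs (by exact_mod_cast hg) (by exact_mod_cast hh) (Ne.symm hne)
        calc s.card ≤ T.card := Finset.card_le_card hsub
          _ = (p - 1) * (q - 1) := hTcard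
    · exact Nat.zero_le _
  · refine le_trans ?_ (Finset.le_sup (Finset.mem_univ T))
    rw [if_pos hTind, hTcard]
end

section
/- For every odd integer n ≥ 3, the prime-coprime graph of the dicyclic group Q_{4n} is isomorphic to the join of the prime-coprime graph of the cyclic group Z_{2n} with the empty graph on 2n vertices; that is, Θ(Q_{4n}) ≅ Θ(Z_{2n}) ∨ E_{2n}. -/
/-- The join of two vertex-disjoint graphs: their disjoint union together with all
edges between the two vertex sets. -/
def graphJoin {V₁ V₂ : Type*} (Γ₁ : SimpleGraph V₁) (Γ₂ : SimpleGraph V₂) :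
    SimpleGraph (V₁ ⊕ V₂) where
  Adj x y :=
    match x, y with
    | Sum.inl a, Sum.inl b => Γ₁.Adj a b
    | Sum.inr a, Sum.inr b => Γ₂.Adj a b
    | Sum.inl _, Sum.inr _ => True
    | Sum.inr _, Sum.inl _ => True
  symm := by
    constructor
    rintro (a | a) (b | b) h
    · exact Γ₁.adj_symm h
    · trivial
    · trivial
    · exact Γ₂.adj_symm h
  loopless := by
    constructor
    rintro (a | a) h
    · exact Γ₁.irrefl h
    · exact Γ₂.irrefl h

/-!
The elements `a i` of `Q_{4n}` form a cyclic subgroup isomorphic to `Z_{2n}`, so they span a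
copy of `Θ(Z_{2n})`. The remaining `2n` elements `xa i` all have order `4`, and `gcd 4 4 = 4`
makes them pairwise non-adjacent. Since `n` is odd, `4` does not divide `2n`, so the order of
every `a i` has gcd `1` or `2` with `4`, and each `xa j` is adjacent to every `a i`.
-/

section PrimeCoprimeGraph

variable {G H : Type*} [Monoid G] [Monoid H]

lemma primeCoprimeGraph_adj_congr {g g' : G} {h h' : H} (hne : g ≠ g' ↔ h ≠ h')
    (hg : orderOf g = orderOf h) (hg' : orderOf g' = orderOf h') :
    (primeCoprimeGraph G).Adj g g' ↔ (primeCoprimeGraph H).Adj h h' := by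
  simp only [primeCoprimeGraph, hne, hg, hg']

lemma primeCoprimeGraph_adj_of_gcd_dvd_two {g h : G} (hne : g ≠ h)
    (h2 : Nat.gcd (orderOf g) (orderOf h) ∣ 2) : (primeCoprimeGraph G).Adj g h :=
  ⟨hne, ((Nat.dvd_prime Nat.prime_two).mp h2).imp_right fun h2 => by simp [h2, Nat.prime_two]⟩

lemma primeCoprimeGraph_not_adj_of_orderOf_eq_four {g h : G} (hg : orderOf g = 4)
    (hh : orderOf h = 4) : ¬ (primeCoprimeGraph G).Adj g h := by
  rintro ⟨-, h⟩
  rw [hg, hh] at h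
  norm_num at h

end PrimeCoprimeGraph

lemma Nat.gcd_four_dvd_two_of_dvd_two_mul {n d : ℕ} (hodd : Odd n) (hd : d ∣ 2 * n) :
    Nat.gcd d 4 ∣ 2 := by
  have h : Nat.gcd (2 * n) (2 * 2) = 2 := by
    rw [Nat.gcd_mul_left, hodd.coprime_two_right.gcd_eq_one, mul_one]
  exact h ▸ Nat.gcd_dvd_gcd_of_dvd_left 4 hd

namespace QuaternionGroup

variable {n : ℕ}

def aHom (n : ℕ) : Multiplicative (ZMod (2 * n)) →* QuaternionGroup n where
  toFun i := a i.toAdd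
  map_one' := a_zero
  map_mul' i j := (a_mul_a i.toAdd j.toAdd).symm

lemma aHom_injective : Function.Injective (aHom n) := fun _ _ h => a.inj h

lemma orderOf_a_eq_orderOf_ofAdd (i : ZMod (2 * n)) :
    orderOf (a i : QuaternionGroup n) = orderOf (Multiplicative.ofAdd i) :=
  orderOf_injective (aHom n) aHom_injective (Multiplicative.ofAdd i)

lemma orderOf_a_dvd (i : ZMod (2 * n)) : orderOf (a i : QuaternionGroup n) ∣ 2 * n := by
  rw [orderOf_a_eq_orderOf_ofAdd, orderOf_ofAdd_eq_addOrderOf]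
  exact addOrderOf_dvd_of_nsmul_eq_zero (by simp)

def equivSum (n : ℕ) : QuaternionGroup n ≃ ZMod (2 * n) ⊕ ZMod (2 * n) where
  toFun
    | a i => .inl i
    | xa i => .inr i
  invFun := Sum.elim a xa
  left_inv := by rintro (i | i) <;> rfl
  right_inv := by rintro (i | i) <;> rfl

lemma primeCoprimeGraph_adj_a_a_iff (i j : ZMod (2 * n)) :
    (primeCoprimeGraph (QuaternionGroup n)).Adj (a i) (a j) ↔
      (primeCoprimeGraph (Multiplicative (ZMod (2 * n)))).Adj
        (Multiplicative.ofAdd i) (Multiplicative.ofAdd j) :=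
  primeCoprimeGraph_adj_congr (by simp) (orderOf_a_eq_orderOf_ofAdd i)
    (orderOf_a_eq_orderOf_ofAdd j)

lemma primeCoprimeGraph_adj_a_xa [NeZero n] (hodd : Odd n) (i j : ZMod (2 * n)) :
    (primeCoprimeGraph (QuaternionGroup n)).Adj (a i) (xa j) :=
  primeCoprimeGraph_adj_of_gcd_dvd_two (by simp)
    (orderOf_xa j ▸ Nat.gcd_four_dvd_two_of_dvd_two_mul hodd (orderOf_a_dvd i))

lemma primeCoprimeGraph_not_adj_xa_xa [NeZero n] (i j : ZMod (2 * n)) :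
    ¬ (primeCoprimeGraph (QuaternionGroup n)).Adj (xa i) (xa j) :=
  primeCoprimeGraph_not_adj_of_orderOf_eq_four (orderOf_xa i) (orderOf_xa j)

end QuaternionGroup

theorem dicyclic_iso_join_general (n : ℕ) [NeZero n] (hodd : Odd n) :
    Nonempty (primeCoprimeGraph (QuaternionGroup n) ≃g
      graphJoin (primeCoprimeGraph (Multiplicative (ZMod (2 * n))))
        (⊥ : SimpleGraph (Fin (2 * n)))) := by
  refine ⟨⟨(QuaternionGroup.equivSum n).trans
    (Equiv.sumCongr Multiplicative.ofAdd (ZMod.finEquiv (2 * n)).symm.toEquiv), ?_⟩⟩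
  rintro (i | i) (j | j)
  · exact (QuaternionGroup.primeCoprimeGraph_adj_a_a_iff i j).symm
  · exact iff_of_true trivial (QuaternionGroup.primeCoprimeGraph_adj_a_xa hodd i j)
  · exact iff_of_true trivial (QuaternionGroup.primeCoprimeGraph_adj_a_xa hodd j i).symm
  · exact iff_of_false id (QuaternionGroup.primeCoprimeGraph_not_adj_xa_xa i j)

theorem dicyclic_iso_join (n : ℕ) [NeZero n] [NeZero (2 * n)] (hn : 3 ≤ n) (hodd : Odd n) :
    Nonempty (primeCoprimeGraph (QuaternionGroup n) ≃g
      graphJoin (primeCoprimeGraph (Multiplicative (ZMod (2 * n))))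
        (⊥ : SimpleGraph (Fin (2 * n)))) :=
  dicyclic_iso_join_general n hodd
end

section
/- Let n ≥ 3 be an integer and write n = 2^k m with k ≥ 0 and m odd. Then the independence number of the prime-coprime graph of the semidihedral group SD_{8n} of order 8n equals 6n − 2m. -/
/-
The cyclic subgroup ⟨a⟩ has order 4n = 2^(k+2) m, and an element of it has order divisible by 4
unless it lies in the subgroup of order 2m; each element a^i b of the other coset squares to
a^(2ni), so it has order 4 for odd i and order 2 for even i. Hence exactly (4n - 2m) + 2n
elements have order divisible by 4, and they form an independent set. Conversely, an element of
order dividing 4 is adjacent to every element whose order is not a multiple of 4, so an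
independent set with at least two elements that meets the coset ⟨a⟩b consists of elements of order
divisible by 4; otherwise it lies in ⟨a⟩ and has at most 4n ≤ 6n - 2m elements.
-/

open Finset Subgroup

namespace Nat

theorem card_filter_range_dvd (c t : ℕ) (hc : 0 < c) : #{i ∈ range (c * t) | c ∣ i} = t := by
  have : {i ∈ range (c * t) | c ∣ i} = (range t).image (c * ·) := by
    ext i
    simp only [mem_filter, mem_range, mem_image]
    constructor
    · rintro ⟨hi, j, rfl⟩
      exact ⟨j, lt_of_mul_lt_mul_left hi c.zero_le, rfl⟩
    · rintro ⟨j, hj, rfl⟩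
      exact ⟨Nat.mul_lt_mul_of_pos_left hj hc, dvd_mul_right c j⟩
  rw [this, Finset.card_image_of_injective _ (mul_right_injective₀ hc.ne'), card_range]

theorem card_filter_range_not_dvd (c t : ℕ) (hc : 0 < c) :
    #{i ∈ range (c * t) | ¬ c ∣ i} = c * t - t := by
  rw [filter_not, card_sdiff_of_subset (filter_subset _ _), card_range,
    card_filter_range_dvd c t hc]

theorem four_dvd_iff_not_dvd_two_mul {m d j : ℕ} (hm : Odd m) (hd : d ∣ 2 ^ j * m) :
    4 ∣ d ↔ ¬ d ∣ 2 * m := by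
  refine ⟨fun h4 hd₂ => ?_, fun hd₂ => ?_⟩
  · obtain ⟨r, rfl⟩ := hm
    have := h4.trans hd₂
    omega
  · obtain ⟨d₁, d₂, h₁, h₂, rfl⟩ := Nat.dvd_mul.mp hd
    obtain ⟨i, -, rfl⟩ := (Nat.dvd_prime_pow prime_two).mp h₁
    by_contra h4
    have hi : i ≤ 1 := by
      by_contra hi
      exact h4 (Dvd.dvd.mul_right (pow_dvd_pow 2 (by omega : 2 ≤ i)) _)
    exact hd₂ (mul_dvd_mul (pow_dvd_pow 2 hi) h₂)

end Nat

section OrderOf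

variable {M : Type*} [Monoid M] {x : M}

theorem four_dvd_orderOf_iff {m j : ℕ} (hm : Odd m) (hx : x ^ (2 ^ j * m) = 1) :
    4 ∣ orderOf x ↔ x ^ (2 * m) ≠ 1 := by
  rw [Nat.four_dvd_iff_not_dvd_two_mul hm (orderOf_dvd_of_pow_eq_one hx),
    orderOf_dvd_iff_pow_eq_one]

theorem pow_mul_eq_one_iff_dvd {c t : ℕ} (hx : orderOf x = c * t) (ht : 0 < t) (i : ℕ) :
    x ^ (t * i) = 1 ↔ c ∣ i := by
  rw [← orderOf_dvd_iff_pow_eq_one, hx, mul_comm t, Nat.mul_dvd_mul_iff_right ht]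

end OrderOf

section Generators

variable {G : Type*} [Group G] {a b : G}

theorem mem_zpowers_or_mul_inv_mem_zpowers (hgen : closure {a, b} = ⊤) (hb : b ^ 2 = 1)
    (hconj : b * a * b⁻¹ ∈ zpowers a) (g : G) :
    g ∈ zpowers a ∨ g * b⁻¹ ∈ zpowers a := by
  have hbb : b * b = 1 := by rwa [← sq]
  have hbb_left (x : G) : b * (b * x) = x := by rw [← mul_assoc, hbb, one_mul]
  have hbinv : b⁻¹ = b := inv_eq_of_mul_eq_one_right hbb
  have hmaps : ∀ h ∈ zpowers a, b * h * b⁻¹ ∈ zpowers a := by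
    rintro _ ⟨i, rfl⟩
    rw [← conj_zpow]
    exact zpow_mem hconj i
  have : (zpowers a).Normal := by
    rw [← normalizer_eq_top_iff, eq_top_iff, ← hgen, closure_le, Set.insert_subset_iff,
      Set.singleton_subset_iff]
    refine ⟨le_normalizer (mem_zpowers a),
      mem_normalizer_iff.mpr fun h => ⟨hmaps h, fun hh => ?_⟩⟩
    simpa [hbinv, mul_assoc, hbb, hbb_left] using hmaps _ hh
  have hle : closure {a, b} ≤ zpowers a ⊔ zpowers b := by
    rw [closure_le, Set.insert_subset_iff, Set.singleton_subset_iff]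
    exact ⟨mem_sup_left (mem_zpowers a), mem_sup_right (mem_zpowers b)⟩
  -- `⟨a⟩` is normal, so `G = ⟨a⟩ ⟨b⟩`, and `⟨b⟩ = {1, b}`.
  have hg : g ∈ ((zpowers a ⊔ zpowers b : Subgroup G) : Set G) := hle (hgen ▸ mem_top g)
  rw [normal_mul] at hg
  obtain ⟨h, hh, _, ⟨j, rfl⟩, rfl⟩ := hg
  rcases Int.even_or_odd' j with ⟨t, rfl | rfl⟩
  · left
    simpa [zpow_mul, hb] using hh
  · right
    simpa [zpow_add, zpow_mul, hb, mul_assoc] using hh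

theorem zpowers_eq_top_of_mem (hcover : ∀ g, g ∈ zpowers a ∨ g * b⁻¹ ∈ zpowers a)
    (hb : b ∈ zpowers a) : zpowers a = ⊤ :=
  (eq_top_iff' _).mpr fun g => (hcover g).elim id fun h => by simpa using mul_mem h hb

theorem sq_pow_mul_of_conj_eq_pow {r : ℕ} (hb : b ^ 2 = 1) (hrel : b * a * b⁻¹ = a ^ r)
    (i : ℕ) : (a ^ i * b) ^ 2 = a ^ (i * (r + 1)) := by
  have hconj : b * a ^ i * b⁻¹ = a ^ (r * i) := by rw [← conj_pow, hrel, ← pow_mul]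
  calc (a ^ i * b) ^ 2 = a ^ i * (b * a ^ i * b⁻¹) * b ^ 2 := by
        simp only [sq, mul_assoc, inv_mul_cancel_left]
    _ = a ^ (i * (r + 1)) := by rw [hconj, hb, mul_one, ← pow_add]; ring_nf

theorem pow_mul_pow_four_eq_one {n : ℕ} (hord : orderOf a = 4 * n)
    (hsq : ∀ i, (a ^ i * b) ^ 2 = a ^ (2 * n * i)) (i : ℕ) : (a ^ i * b) ^ 4 = 1 := by
  rw [show 4 = 2 * 2 from rfl, pow_mul, hsq, ← pow_mul, show 2 * n * i * 2 = 4 * n * i by ring,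
    pow_mul, ← hord, pow_orderOf_eq_one, one_pow]

theorem exists_pow_lt_orderOf_eq_of_mem_zpowers [Finite G] {g : G} (hg : g ∈ zpowers a) :
    ∃ i < orderOf a, a ^ i = g := by
  classical
  simpa using mem_zpowers_iff_mem_range_orderOf.mp hg

theorem exists_pow_mul_eq_of_notMem_zpowers [Finite G]
    (hcover : ∀ g, g ∈ zpowers a ∨ g * b⁻¹ ∈ zpowers a) {g : G} (hg : g ∉ zpowers a) :
    ∃ i < orderOf a, a ^ i * b = g := by
  obtain ⟨i, hi, hgi⟩ := exists_pow_lt_orderOf_eq_of_mem_zpowers ((hcover g).resolve_left hg)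
  exact ⟨i, hi, eq_mul_inv_iff_mul_eq.mp hgi⟩

end Generators

section Counting

variable {G : Type*} [Group G] [Fintype G] {a b : G}

theorem card_filter_eq_card_filter_pow_add (P : G → Prop) [DecidablePred P]
    (hcover : ∀ g, g ∈ zpowers a ∨ g * b⁻¹ ∈ zpowers a) (hb : b ∉ zpowers a) :
    #{g | P g} =
      #{i ∈ range (orderOf a) | P (a ^ i)} + #{i ∈ range (orderOf a) | P (a ^ i * b)} := by
  classical
  have hcoset (i : ℕ) : a ^ i * b ∉ zpowers a := fun h =>
    hb (by simpa using mul_mem (inv_mem (npow_mem_zpowers a i)) h)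
  have hlt {Q : ℕ → Prop} [DecidablePred Q] {i : ℕ}
      (hi : i ∈ {i ∈ range (orderOf a) | Q i}) :
      i ∈ Set.Iio (orderOf a) :=
    mem_range.mp (mem_filter.mp hi).1
  rw [← card_filter_add_card_filter_not (p := (· ∈ zpowers a)), filter_filter, filter_filter]
  congr 1
  · refine (card_nbij (a ^ ·) (fun i hi => ?_) ?_ fun g hg => ?_).symm
    · exact mem_filter.mpr ⟨mem_univ _, (mem_filter.mp hi).2, npow_mem_zpowers a i⟩
    · exact fun i hi j hj h => pow_injOn_Iio_orderOf (hlt hi) (hlt hj) h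
    · obtain ⟨-, hPg, hg⟩ := mem_filter.mp hg
      obtain ⟨i, hi, rfl⟩ := exists_pow_lt_orderOf_eq_of_mem_zpowers hg
      exact ⟨i, mem_filter.mpr ⟨mem_range.mpr hi, hPg⟩, rfl⟩
  · refine (card_nbij (a ^ · * b) (fun i hi => ?_) ?_ fun g hg => ?_).symm
    · exact mem_filter.mpr ⟨mem_univ _, (mem_filter.mp hi).2, hcoset i⟩
    · exact fun i hi j hj h => pow_injOn_Iio_orderOf (hlt hi) (hlt hj) (mul_right_cancel h)
    · obtain ⟨-, hPg, hg⟩ := mem_filter.mp hg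
      obtain ⟨i, hi, rfl⟩ := exists_pow_mul_eq_of_notMem_zpowers hcover hg
      exact ⟨i, mem_filter.mpr ⟨mem_range.mpr hi, hPg⟩, rfl⟩

theorem card_eq_two_mul_orderOf (hcover : ∀ g, g ∈ zpowers a ∨ g * b⁻¹ ∈ zpowers a)
    (hb : b ∉ zpowers a) : Fintype.card G = 2 * orderOf a := by
  simpa [two_mul] using card_filter_eq_card_filter_pow_add (fun _ => True) hcover hb

theorem card_filter_four_dvd_orderOf {n k m : ℕ} (hm : Odd m) (hnkm : n = 2 ^ k * m)
    (hcover : ∀ g, g ∈ zpowers a ∨ g * b⁻¹ ∈ zpowers a) (hb : b ∉ zpowers a)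
    (hord : orderOf a = 4 * n) (hsq : ∀ i, (a ^ i * b) ^ 2 = a ^ (2 * n * i)) :
    #{g : G | 4 ∣ orderOf g} = 6 * n - 2 * m := by
  have hmn : m ≤ n := hnkm ▸ Nat.le_mul_of_pos_left m (Nat.two_pow_pos k)
  have hm₀ : 0 < m := hm.pos
  have hrot (i : ℕ) : 4 ∣ orderOf (a ^ i) ↔ ¬ 2 ^ (k + 1) ∣ i := by
    have hpow : (a ^ i) ^ (2 ^ (k + 2) * m) = 1 := by
      rw [← pow_mul, mul_comm, pow_mul, show 2 ^ (k + 2) * m = 4 * n by rw [hnkm]; ring, ← hord,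
        pow_orderOf_eq_one, one_pow]
    rw [four_dvd_orderOf_iff hm hpow, ← pow_mul, mul_comm, ne_eq,
      pow_mul_eq_one_iff_dvd (c := 2 ^ (k + 1)) (hord.trans (by rw [hnkm]; ring)) (by omega)]
  have hrefl (i : ℕ) : 4 ∣ orderOf (a ^ i * b) ↔ ¬ 2 ∣ i := by
    rw [four_dvd_orderOf_iff (j := 2) odd_one (pow_mul_pow_four_eq_one hord hsq i), mul_one,
      hsq, ne_eq, pow_mul_eq_one_iff_dvd (c := 2) (hord.trans (by ring)) (by omega)]
  have hcount₁ : #{i ∈ range (4 * n) | ¬ 2 ^ (k + 1) ∣ i} = 4 * n - 2 * m := by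
    rw [show 4 * n = 2 ^ (k + 1) * (2 * m) by rw [hnkm]; ring,
      Nat.card_filter_range_not_dvd _ _ (Nat.two_pow_pos _)]
  have hcount₂ : #{i ∈ range (4 * n) | ¬ 2 ∣ i} = 2 * n := by
    rw [show 4 * n = 2 * (2 * n) by ring, Nat.card_filter_range_not_dvd _ _ two_pos]
    omega
  rw [card_filter_eq_card_filter_pow_add _ hcover hb, hord]
  simp only [hrot, hrefl, hcount₁, hcount₂]
  omega

end Counting

theorem indepNum_eq_card {V : Type*} [Fintype V] {Γ : SimpleGraph V} {t : Finset V}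
    (ht : IsIndepSet Γ t) (hmax : ∀ s : Finset V, IsIndepSet Γ s → #s ≤ #t) :
    indepNum Γ = #t := by
  unfold indepNum
  refine le_antisymm (Finset.sup_le fun s _ => ?_) ?_
  · split_ifs with hs
    exacts [hmax s hs, Nat.zero_le _]
  · convert Finset.le_sup (f := fun s : Finset V => if IsIndepSet Γ s then #s else 0) (mem_univ t)
    rw [if_pos ht]

section PrimeCoprimeGraph

variable {M : Type*} [Monoid M] {g h : M}

theorem primeCoprimeGraph_adj_of_gcd_dvd_prime {p : ℕ} (hp : p.Prime) (hne : g ≠ h)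
    (hd : Nat.gcd (orderOf g) (orderOf h) ∣ p) : (primeCoprimeGraph M).Adj g h :=
  ⟨hne, ((Nat.dvd_prime hp).mp hd).imp_right fun h => by rwa [h]⟩

theorem four_dvd_gcd_orderOf_of_not_adj (hg : orderOf g ∣ 4) (hne : g ≠ h)
    (hgh : ¬ (primeCoprimeGraph M).Adj g h) : 4 ∣ Nat.gcd (orderOf g) (orderOf h) := by
  obtain ⟨i, hi, hd⟩ := (Nat.dvd_prime_pow Nat.prime_two).mp
    ((Nat.gcd_dvd_left _ _).trans hg : _ ∣ 2 ^ 2)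
  rw [hd]
  interval_cases i
  · exact absurd (primeCoprimeGraph_adj_of_gcd_dvd_prime Nat.prime_two hne (by simp [hd])) hgh
  · exact absurd (primeCoprimeGraph_adj_of_gcd_dvd_prime Nat.prime_two hne (by simp [hd])) hgh
  · norm_num

theorem isIndepSet_of_forall_four_dvd_orderOf {s : Set M} (hs : ∀ g ∈ s, 4 ∣ orderOf g) :
    IsIndepSet (primeCoprimeGraph M) s := by
  rintro g hg h hh - ⟨-, hgcd⟩
  have h4 : 4 ∣ Nat.gcd (orderOf g) (orderOf h) := Nat.dvd_gcd (hs g hg) (hs h hh)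
  rcases hgcd with h1 | hp
  · rw [h1] at h4
    norm_num at h4
  · rcases hp.eq_one_or_self_of_dvd 4 h4 with h | h
    · omega
    · rw [← h] at hp
      norm_num at hp

end PrimeCoprimeGraph

theorem IsIndepSet.card_le_max {G : Type*} [Group G] [Fintype G] {H : Subgroup G}
    (hH : ∀ g : G, g ∉ H → orderOf g ∣ 4) {s : Finset G}
    (hs : IsIndepSet (primeCoprimeGraph G) s) :
    #s ≤ max (Nat.card H) #{g : G | 4 ∣ orderOf g} := by
  by_cases hs1 : #s ≤ 1
  · exact hs1.trans (le_max_of_le_left Nat.card_pos)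
  rw [not_le] at hs1
  by_cases hsH : ↑s ⊆ (H : Set G)
  · refine le_max_of_le_left ?_
    rw [← Set.ncard_coe_finset]
    exact (Set.ncard_le_ncard hsH).trans_eq (Nat.card_coe_set_eq _).symm
  obtain ⟨g, hgs, hgH⟩ := Set.not_subset.mp hsH
  refine le_max_of_le_right (card_le_card fun y hy => mem_filter.mpr ⟨mem_univ y, ?_⟩)
  by_cases hyg : y = g
  · obtain ⟨z, hz, hzg⟩ := exists_mem_ne hs1 g
    subst hyg
    exact (four_dvd_gcd_orderOf_of_not_adj (hH y hgH) hzg.symm (hs hgs hz hzg.symm)).trans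
      (Nat.gcd_dvd_left _ _)
  · exact (four_dvd_gcd_orderOf_of_not_adj (hH g hgH) (Ne.symm hyg)
      (hs hgs hy (Ne.symm hyg))).trans (Nat.gcd_dvd_right _ _)

theorem indepNum_semidihedral_general (n k m : ℕ) (hm : Odd m)
    (hnkm : n = 2 ^ k * m) (G : Type*) [Group G] [Fintype G] (a b : G)
    (hcard : Fintype.card G = 8 * n)
    (hgen : Subgroup.closure {a, b} = ⊤)
    (ha : a ^ (4 * n) = 1) (hb : b ^ 2 = 1)
    (hrel : b * a * b⁻¹ = a ^ (2 * n - 1)) :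
    indepNum (primeCoprimeGraph G) = 6 * n - 2 * m := by
  have hn : 0 < n := by have := Fintype.card_pos (α := G); omega
  have hmn : m ≤ n := hnkm ▸ Nat.le_mul_of_pos_left m (Nat.two_pow_pos k)
  have hcover := mem_zpowers_or_mul_inv_mem_zpowers hgen hb (hrel ▸ npow_mem_zpowers a _)
  have hbH : b ∉ zpowers a := fun hbH => by
    have := orderOf_le_of_pow_eq_one (by omega) ha
    rw [← Nat.card_zpowers, zpowers_eq_top_of_mem hcover hbH, card_top,
      Nat.card_eq_fintype_card] at this
    omega
  have hord : orderOf a = 4 * n := by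
    have := card_eq_two_mul_orderOf hcover hbH
    omega
  have hsq (i : ℕ) : (a ^ i * b) ^ 2 = a ^ (2 * n * i) := by
    rw [sq_pow_mul_of_conj_eq_pow hb hrel, Nat.sub_add_cancel (by omega), mul_comm]
  have hS := card_filter_four_dvd_orderOf hm hnkm hcover hbH hord hsq
  have hcoset (g : G) (hg : g ∉ zpowers a) : orderOf g ∣ 4 := by
    obtain ⟨i, -, rfl⟩ := exists_pow_mul_eq_of_notMem_zpowers hcover hg
    exact orderOf_dvd_of_pow_eq_one (pow_mul_pow_four_eq_one hord hsq i)
  rw [← hS]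
  refine indepNum_eq_card (isIndepSet_of_forall_four_dvd_orderOf fun g hg => ?_) fun s hs => ?_
  · exact (mem_filter.mp hg).2
  · refine (hs.card_le_max hcoset).trans_eq (max_eq_right ?_)
    rw [Nat.card_zpowers, hord, hS]
    omega

theorem indepNum_semidihedral (n k m : ℕ) (hn : 3 ≤ n) (hm : Odd m)
    (hnkm : n = 2 ^ k * m) (G : Type*) [Group G] [Fintype G] (a b : G)
    (hcard : Fintype.card G = 8 * n)
    (hgen : Subgroup.closure {a, b} = ⊤)
    (ha : a ^ (4 * n) = 1) (hb : b ^ 2 = 1)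
    (hrel : b * a * b⁻¹ = a ^ (2 * n - 1)) :
    indepNum (primeCoprimeGraph G) = 6 * n - 2 * m :=
  indepNum_semidihedral_general n k m hm hnkm G a b hcard hgen ha hb hrel
end
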